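/- For any countably infinite subset X of [0,1] there exists a subset Y of [0,1] such that: Y is dense in [0,1], Y is uncountable, Y is invariant under the tent map T (i.e. T(Y) ⊆ Y), Y is a 1-scrambled set for T, every point of Y is a transitive point of T, and for every x ∈ X and every y ∈ Y one has limsup_{n→∞} |Tⁿ(x) − Tⁿ(y)| ≥ 1/2 and liminf_{n→∞} |Tⁿ(x) − Tⁿ(y)| = 0. -/

import Mathlib

open Filter

/-- The tent map `T(x) = 1 - |2x - 1|`. -/
noncomputable def tentMap (x : ℝ) : ℝ := 1 - |2 * x - 1|

/-!
If `x = 0.d₀d₁d₂…` in binary then `T^[p+1] x = T (0.d_p d_{p+1}…)`, and `T (0.a₀a₁…)` is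
determined up to `2 ^ (1 - J)` by `a₀ … a_{J-1}`: the orbit of `x` is read off its digits.
The scrambled set is the union of the forward orbits of points `y_α`, one for each
`α : ℕ → Bool`, whose digits are laid out in stages `[t², (t + 1)²)`: a window of length `t`
followed by `t + 1` zeros. Every window carries an instruction, and every instruction recurs
in arbitrarily late windows. Words copied into windows make every orbit dense; a lone `1`
placed according to `α` separates the orbits of different `y_α` (and those of `y_α` and
its iterates, and `y_α` from the fixed point `0`) to distance almost `1`; a lone `1` placed
according to the position of `T^[k] x` keeps the orbit `1/2` away from `x ∈ X` at time `k`,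
and copied digits of `x` make the orbit shadow `x`. The zero gaps bring all these orbits
simultaneously close to `0`, and keep them `1/2` away from any periodic orbit other than `0`.
-/

theorem tentMap_of_le_half {x : ℝ} (hx : x ≤ 1 / 2) : tentMap x = 2 * x := by
  rw [tentMap, abs_of_nonpos (by linarith)]; ring

theorem tentMap_of_half_le {x : ℝ} (hx : 1 / 2 ≤ x) : tentMap x = 2 - 2 * x := by
  rw [tentMap, abs_of_nonneg (by linarith)]; ring

theorem tentMap_one_sub (x : ℝ) : tentMap (1 - x) = tentMap x := by
  rw [tentMap, tentMap, ← abs_neg]; ring_nf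

theorem mapsTo_tentMap_Icc : Set.MapsTo tentMap (Set.Icc 0 1) (Set.Icc 0 1) := by
  rintro x ⟨hx₀, hx₁⟩
  have := abs_le.2 (⟨by linarith, by linarith⟩ : -1 ≤ 2 * x - 1 ∧ 2 * x - 1 ≤ 1)
  exact ⟨by rw [tentMap]; linarith, by rw [tentMap]; linarith [abs_nonneg (2 * x - 1)]⟩

theorem abs_tentMap_sub_le (x y : ℝ) : |tentMap x - tentMap y| ≤ 2 * |x - y| :=
  calc |tentMap x - tentMap y| = |(|2 * y - 1| - |2 * x - 1|)| := by
        rw [tentMap, tentMap]; ring_nf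
    _ ≤ |(2 * y - 1) - (2 * x - 1)| := abs_abs_sub_abs_le_abs_sub _ _
    _ = 2 * |x - y| := by rw [← abs_two, ← abs_mul, abs_sub_comm]; ring_nf

theorem abs_iterate_tentMap_sub_le_one {x y : ℝ} (hx : x ∈ Set.Icc 0 1) (hy : y ∈ Set.Icc 0 1)
    (n : ℕ) : |tentMap^[n] x - tentMap^[n] y| ≤ 1 := by
  obtain ⟨hx₀, hx₁⟩ := mapsTo_tentMap_Icc.iterate n hx
  obtain ⟨hy₀, hy₁⟩ := mapsTo_tentMap_Icc.iterate n hy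
  rw [abs_le]; constructor <;> linarith

theorem ofDigits_eq_half_add_half (d : ℕ → Fin 2) :
    Real.ofDigits d = (d 0 : ℝ) / 2 + Real.ofDigits (fun i => d (i + 1)) / 2 := by
  rw [Real.ofDigits_eq_sum_add_ofDigits d 1]
  simp only [Finset.range_one, Finset.sum_singleton, Real.ofDigitsTerm, Nat.cast_ofNat, zero_add,
    pow_one]
  ring

theorem ofDigits_mem_Icc (d : ℕ → Fin 2) : Real.ofDigits d ∈ Set.Icc 0 1 :=
  ⟨Real.ofDigits_nonneg d, Real.ofDigits_le_one d⟩

theorem tentMap_tentMap_ofDigits (d : ℕ → Fin 2) :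
    tentMap (tentMap (Real.ofDigits d)) = tentMap (Real.ofDigits fun i => d (i + 1)) := by
  obtain ⟨h₀, h₁⟩ := ofDigits_mem_Icc fun i => d (i + 1)
  have hd := ofDigits_eq_half_add_half d
  generalize (Real.ofDigits fun i => d (i + 1)) = z at h₀ h₁ hd ⊢
  rcases Fin.exists_fin_two.mp ⟨d 0, rfl⟩ with h | h <;> rw [h] at hd
  · have hx : Real.ofDigits d = z / 2 := by simpa using hd
    rw [hx, tentMap_of_le_half (x := z / 2) (by linarith)]; ring_nf
  · have hx : Real.ofDigits d = 1 / 2 + z / 2 := by simpa using hd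
    rw [hx, tentMap_of_half_le (x := 1 / 2 + z / 2) (by linarith), ← tentMap_one_sub]; ring_nf

theorem tentMap_iterate_succ_ofDigits (d : ℕ → Fin 2) (p : ℕ) :
    tentMap^[p + 1] (Real.ofDigits d) = tentMap (Real.ofDigits fun i => d (p + i)) := by
  induction p generalizing d with
  | zero => simp
  | succ p ih =>
    rw [Function.iterate_succ_apply, Function.iterate_succ_apply, tentMap_tentMap_ofDigits,
      ← Function.iterate_succ_apply, ih]
    simp only [add_assoc, add_comm 1]

theorem tentMap_iterate_iterate_ofDigits (d : ℕ → Fin 2) {k m p : ℕ} (hk : 0 < k)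
    (hp : k - 1 + m = p) :
    tentMap^[k] (tentMap^[m] (Real.ofDigits d)) = tentMap (Real.ofDigits fun i => d (p + i)) := by
  rw [← Function.iterate_add_apply, show k + m = p + 1 by omega, tentMap_iterate_succ_ofDigits]

theorem abs_tentMap_ofDigits_sub_le {a b : ℕ → Fin 2} {J : ℕ} (h : ∀ i < J, a i = b i) :
    |tentMap (Real.ofDigits a) - tentMap (Real.ofDigits b)| ≤ 2 * ((2 : ℝ) ^ J)⁻¹ :=
  (abs_tentMap_sub_le _ _).trans (by gcongr; simpa using Real.abs_ofDigits_sub_ofDigits_le h)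

theorem tentMap_ofDigits_le_of_eq_zero {a : ℕ → Fin 2} {J : ℕ} (h : ∀ i < J, a i = 0) :
    tentMap (Real.ofDigits a) ≤ 2 * ((2 : ℝ) ^ J)⁻¹ := by
  have h0 : tentMap (Real.ofDigits fun _ : ℕ => (0 : Fin 2)) = 0 := by
    simp [Real.ofDigits, Real.ofDigitsTerm, tentMap]
  have := abs_tentMap_ofDigits_sub_le (b := fun _ => 0) h
  rw [h0, sub_zero] at this
  exact (le_abs_self _).trans this

theorem one_sub_le_tentMap_ofDigits {a : ℕ → Fin 2} {J : ℕ}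
    (h : ∀ i < J, a i = if i = 0 then 1 else 0) :
    1 - 2 * ((2 : ℝ) ^ J)⁻¹ ≤ tentMap (Real.ofDigits a) := by
  have h1 : tentMap (Real.ofDigits fun i : ℕ => if i = 0 then (1 : Fin 2) else 0) = 1 := by
    rw [ofDigits_eq_half_add_half]
    simp [Real.ofDigits, Real.ofDigitsTerm, tentMap]
  have := abs_tentMap_ofDigits_sub_le h
  rw [h1, abs_le] at this
  linarith [this.1]

theorem exists_two_mul_inv_two_pow_lt {ε : ℝ} (hε : 0 < ε) :
    ∃ J : ℕ, 2 * ((2 : ℝ) ^ J)⁻¹ < ε := by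
  obtain ⟨J, hJ⟩ := exists_pow_lt_of_lt_one (half_pos hε) (by norm_num : (2 : ℝ)⁻¹ < 1)
  exact ⟨J, by rw [← inv_pow]; linarith⟩

theorem eq_zero_of_isPeriodicPt_of_iterate_lt_half {n : ℕ} {p : ℝ}
    (hp : Function.IsPeriodicPt tentMap n p) (hn : 0 < n)
    (hlt : ∀ j < n, tentMap^[j] p < 1 / 2) : p = 0 := by
  have hpow : ∀ j, tentMap^[j] p = 2 ^ j * p := by
    intro j
    induction j with
    | zero => simp
    | succ j ih =>
      rw [Function.iterate_succ_apply', tentMap_of_le_half, ih, pow_succ]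
      · ring
      · rw [← hp.iterate_mod_apply]; exact (hlt _ (Nat.mod_lt _ hn)).le
  have h := hpow n
  rw [hp.eq] at h
  have : (1 : ℝ) < 2 ^ n := one_lt_pow₀ (by norm_num) hn.ne'
  nlinarith

theorem le_limsup_of_forall_frequently {ι : Type*} {f : Filter ι} {u : ι → ℝ} {c : ℝ}
    (hu : IsBoundedUnder (· ≤ ·) f u) (h : ∀ ε > 0, ∃ᶠ i in f, c - ε ≤ u i) :
    c ≤ limsup u f :=
  le_of_forall_pos_le_add fun ε hε => by linarith [le_limsup_of_frequently_le (h ε hε) hu]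

theorem liminf_eq_zero_of_forall_frequently {ι : Type*} {f : Filter ι} [f.NeBot] {u : ι → ℝ}
    (h0 : ∀ i, 0 ≤ u i) (hu : IsBoundedUnder (· ≤ ·) f u)
    (h : ∀ ε > 0, ∃ᶠ i in f, u i ≤ ε) : liminf u f = 0 := by
  refine le_antisymm (le_of_forall_pos_le_add fun ε hε => ?_)
    (le_liminf_of_le hu.isCoboundedUnder_ge (Eventually.of_forall h0))
  rw [zero_add]
  exact liminf_le_of_frequently_le (h ε hε) (isBoundedUnder_of ⟨0, h0⟩)

theorem le_limsup_abs_iterate_sub {x y : ℝ} (hx : x ∈ Set.Icc 0 1) (hy : y ∈ Set.Icc 0 1)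
    {c : ℝ} (h : ∀ ε > 0, ∃ᶠ n in atTop, c - ε ≤ |tentMap^[n] x - tentMap^[n] y|) :
    c ≤ limsup (fun n => |tentMap^[n] x - tentMap^[n] y|) atTop :=
  le_limsup_of_forall_frequently
    (isBoundedUnder_of ⟨1, abs_iterate_tentMap_sub_le_one hx hy⟩) h

theorem liminf_abs_iterate_sub_eq_zero {x y : ℝ} (hx : x ∈ Set.Icc 0 1) (hy : y ∈ Set.Icc 0 1)
    (h : ∀ ε > 0, ∃ᶠ n in atTop, |tentMap^[n] x - tentMap^[n] y| ≤ ε) :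
    liminf (fun n => |tentMap^[n] x - tentMap^[n] y|) atTop = 0 :=
  liminf_eq_zero_of_forall_frequently (fun _ => abs_nonneg _)
    (isBoundedUnder_of ⟨1, abs_iterate_tentMap_sub_le_one hx hy⟩) h

namespace TentScrambled

def stageCode (t : ℕ) : ℕ × ℕ := Nat.unpair (Nat.unpair t).1

theorem exists_stageCode_eq (c : ℕ × ℕ) (K : ℕ) : ∃ t, K ≤ t ∧ stageCode t = c :=
  ⟨Nat.pair (Nat.pair c.1 c.2) K, Nat.right_le_pair _ _, by simp [stageCode]⟩

def word (c i : ℕ) : Fin 2 := ((Encodable.decode c : Option (List (Fin 2))).getD []).getD i 0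

theorem exists_word_eq (δ : ℕ → Fin 2) (r : ℕ) : ∃ c, ∀ i < r, word c i = δ i :=
  ⟨Encodable.encode ((List.range r).map δ), fun i hi => by simp [word, Encodable.encodek, hi]⟩

def pulsePos (b : Bool) (t : ℕ) : ℕ := if b then 0 else t - 1

theorem pulsePos_true (t : ℕ) : pulsePos true t = 0 := rfl

theorem pulsePos_false (t : ℕ) : pulsePos false t = t - 1 := rfl

theorem pulsePos_lt (b : Bool) {t : ℕ} (ht : 0 < t) : pulsePos b t < t := by
  cases b <;> simp only [pulsePos_true, pulsePos_false] <;> omega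

def pulse (b : Bool) (t i : ℕ) : Fin 2 := if i = pulsePos b t then 1 else 0

-- `σ u` is a binary expansion of the `u`-th point to keep away from; `point σ α` is `y_α`.
variable (σ : ℕ → ℕ → Fin 2) (α : ℕ → Bool)

/-- Instruction `(0, c)` copies the `c`-th finite word; `(1, j)` is a lone `1` at the start of
the window if `α j` and at its end otherwise. For `c = Nat.pair u v` and `x_u = ofDigits (σ u)`,
let `k` be the time at which the orbit of `T^[v] y_α` reads the start of the window: `(2, c)` is
a lone `1` at the start if `T^[k] x_u ≤ 1/2` and at the end otherwise, and `(3, c)` copies the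
digits of `x_u` that `T^[k] x_u` reads. -/
noncomputable def windowDigit (t i : ℕ) : Fin 2 :=
  match stageCode t with
  | (0, c) => word c i
  | (1, j) => pulse (α j) t i
  | (2, c) =>
    pulse (decide (tentMap^[t * t + 1 - c.unpair.2] (Real.ofDigits (σ c.unpair.1)) ≤ 1 / 2)) t i
  | (_, c) => σ c.unpair.1 (t * t - c.unpair.2 + i)

noncomputable def digitSeq (q : ℕ) : Fin 2 :=
  if q - q.sqrt * q.sqrt < q.sqrt then windowDigit σ α q.sqrt (q - q.sqrt * q.sqrt) else 0

noncomputable def point : ℝ := Real.ofDigits (digitSeq σ α)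

theorem digitSeq_stage {t i : ℕ} (hi : i ≤ 2 * t) :
    digitSeq σ α (t * t + i) = if i < t then windowDigit σ α t i else 0 := by
  simp [digitSeq, Nat.sqrt_add_eq t (show i ≤ t + t by omega)]

theorem digitSeq_stage_of_pulse {t : ℕ} {b : Bool} (ht : 0 < t)
    (hw : ∀ i, windowDigit σ α t i = pulse b t i) {i : ℕ} (hi : i ≤ 2 * t) :
    digitSeq σ α (t * t + i) = if i = pulsePos b t then 1 else 0 := by
  have := pulsePos_lt b ht
  rw [digitSeq_stage σ α hi, hw, pulse]
  split_ifs <;> omega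

theorem iterate_point_eq {k m p : ℕ} (hk : 0 < k) (hp : k - 1 + m = p) :
    tentMap^[k] (tentMap^[m] (point σ α)) =
      tentMap (Real.ofDigits fun j => digitSeq σ α (p + j)) :=
  tentMap_iterate_iterate_ofDigits _ hk hp

theorem iterate_point_le_of_gap {t i k m J : ℕ} (hk : 0 < k) (hp : k - 1 + m = t * t + i)
    (hti : t ≤ i) (hJ : i + J ≤ 2 * t + 1) :
    tentMap^[k] (tentMap^[m] (point σ α)) ≤ 2 * ((2 : ℝ) ^ J)⁻¹ := by
  rw [iterate_point_eq σ α hk hp]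
  refine tentMap_ofDigits_le_of_eq_zero fun j hj => ?_
  rw [add_assoc, digitSeq_stage σ α (by omega), if_neg (by omega)]

theorem iterate_point_le_of_pulse {t i k m J : ℕ} {b : Bool} (ht : 0 < t)
    (hw : ∀ i, windowDigit σ α t i = pulse b t i) (hk : 0 < k) (hp : k - 1 + m = t * t + i)
    (hP : ∀ j < J, i + j ≠ pulsePos b t) (hJ : i + J ≤ 2 * t + 1) :
    tentMap^[k] (tentMap^[m] (point σ α)) ≤ 2 * ((2 : ℝ) ^ J)⁻¹ := by
  rw [iterate_point_eq σ α hk hp]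
  refine tentMap_ofDigits_le_of_eq_zero fun j hj => ?_
  rw [add_assoc, digitSeq_stage_of_pulse σ α ht hw (by omega), if_neg (hP j hj)]

theorem one_sub_le_iterate_point_of_pulse {t k m J : ℕ} {b : Bool} (ht : 0 < t)
    (hw : ∀ i, windowDigit σ α t i = pulse b t i) (hk : 0 < k)
    (hp : k - 1 + m = t * t + pulsePos b t) (hJ : J ≤ t + 1) :
    1 - 2 * ((2 : ℝ) ^ J)⁻¹ ≤ tentMap^[k] (tentMap^[m] (point σ α)) := by
  have := pulsePos_lt b ht
  rw [iterate_point_eq σ α hk hp]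
  refine one_sub_le_tentMap_ofDigits fun j hj => ?_
  rw [add_assoc, digitSeq_stage_of_pulse σ α ht hw (by omega)]
  simp

theorem iterate_point_mem_Icc (k m : ℕ) :
    tentMap^[k] (tentMap^[m] (point σ α)) ∈ Set.Icc 0 1 :=
  mapsTo_tentMap_Icc.iterate k (mapsTo_tentMap_Icc.iterate m (ofDigits_mem_Icc _))

theorem frequently_one_sub_le_abs_sub_of_lt {m n : ℕ} (hmn : m < n) {ε : ℝ} (hε : 0 < ε) :
    ∃ᶠ k in atTop, 1 - ε ≤
      |tentMap^[k] (tentMap^[m] (point σ α)) - tentMap^[k] (tentMap^[n] (point σ α))| := by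
  obtain ⟨J, hJ⟩ := exists_two_mul_inv_two_pow_lt (half_pos hε)
  refine frequently_atTop.2 fun K => ?_
  obtain ⟨t, htK, ht⟩ := exists_stageCode_eq (1, 0) (K + n + J + 1)
  have hw : ∀ i, windowDigit σ α t i = pulse (α 0) t i := fun i => by simp [windowDigit, ht]
  have hP := pulsePos_lt (α 0) (t := t) (by omega)
  have htt := Nat.le_mul_self t
  refine ⟨t * t + pulsePos (α 0) t + 1 - m, by omega, ?_⟩
  have h₁ := one_sub_le_iterate_point_of_pulse σ α (k := t * t + pulsePos (α 0) t + 1 - m)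
    (m := m) (J := J) (by omega) hw (by omega) (by omega) (by omega)
  have h₂ := iterate_point_le_of_pulse σ α (k := t * t + pulsePos (α 0) t + 1 - m) (m := n)
    (i := pulsePos (α 0) t + (n - m)) (J := J) (by omega) hw (by omega) (by omega)
    (fun j _ => by omega) (by omega)
  rw [le_abs]; left; linarith

theorem frequently_one_sub_le_abs_sub_of_apply_true_of_apply_false {β : ℕ → Bool} {j : ℕ}
    (hα : α j = true) (hβ : β j = false) (m n : ℕ) {ε : ℝ} (hε : 0 < ε) :
    ∃ᶠ k in atTop, 1 - ε ≤
      |tentMap^[k] (tentMap^[m] (point σ α)) - tentMap^[k] (tentMap^[n] (point σ β))| := by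
  obtain ⟨J, hJ⟩ := exists_two_mul_inv_two_pow_lt (half_pos hε)
  refine frequently_atTop.2 fun K => ?_
  obtain ⟨t, htK, ht⟩ := exists_stageCode_eq (1, j) (K + m + n + J + 2)
  have hwα : ∀ i, windowDigit σ α t i = pulse true t i := fun i => by
    simp [windowDigit, ht, hα]
  have hwβ : ∀ i, windowDigit σ β t i = pulse false t i := fun i => by
    simp [windowDigit, ht, hβ]
  have htt := Nat.le_mul_self t
  -- at time `k` the orbit of `T^[n] y_β` reads its `1` at the end of the window, while that of
  -- `T^[m] y_α`, whose `1` is at the start, reads zeros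
  refine ⟨t * t + t - n, by omega, ?_⟩
  have h₁ := iterate_point_le_of_pulse σ α (k := t * t + t - n) (m := m) (i := t - 1 + m - n)
    (J := J) (by omega) hwα (by omega) (by omega) (fun j _ => by rw [pulsePos_true]; omega)
    (by omega)
  have h₂ := one_sub_le_iterate_point_of_pulse σ β (k := t * t + t - n) (m := n) (J := J)
    (by omega) hwβ (by omega) (by rw [pulsePos_false]; omega) (by omega)
  rw [le_abs]; right; linarith

theorem frequently_abs_sub_le (β : ℕ → Bool) (m n : ℕ) {ε : ℝ} (hε : 0 < ε) :
    ∃ᶠ k in atTop,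
      |tentMap^[k] (tentMap^[m] (point σ α)) - tentMap^[k] (tentMap^[n] (point σ β))| ≤ ε := by
  obtain ⟨J, hJ⟩ := exists_two_mul_inv_two_pow_lt hε
  refine frequently_atTop.2 fun K => ?_
  set t := K + m + n + J
  have htt := Nat.le_mul_self t
  refine ⟨t * t + t + 1, by omega, ?_⟩
  have h₁ := iterate_point_le_of_gap σ α (t := t) (k := t * t + t + 1) (m := m) (i := t + m)
    (J := J) (by omega) (by omega) (by omega) (by omega)
  have h₂ := iterate_point_le_of_gap σ β (t := t) (k := t * t + t + 1) (m := n) (i := t + n)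
    (J := J) (by omega) (by omega) (by omega) (by omega)
  have h₃ := (iterate_point_mem_Icc σ α (t * t + t + 1) m).1
  have h₄ := (iterate_point_mem_Icc σ β (t * t + t + 1) n).1
  rw [abs_le]; constructor <;> linarith

theorem frequently_half_sub_le_abs_ofDigits_sub (u v : ℕ) {ε : ℝ} (hε : 0 < ε) :
    ∃ᶠ k in atTop, 1 / 2 - ε ≤
      |tentMap^[k] (Real.ofDigits (σ u)) - tentMap^[k] (tentMap^[v] (point σ α))| := by
  obtain ⟨J, hJ⟩ := exists_two_mul_inv_two_pow_lt hε
  refine frequently_atTop.2 fun K => ?_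
  obtain ⟨t, htK, ht⟩ := exists_stageCode_eq (2, Nat.pair u v) (K + v + J + 2)
  have htt := Nat.le_mul_self t
  refine ⟨t * t + 1 - v, by omega, ?_⟩
  have hw : ∀ i, windowDigit σ α t i = pulse (decide
      (tentMap^[t * t + 1 - v] (Real.ofDigits (σ u)) ≤ 1 / 2)) t i := fun i => by
    simp [windowDigit, ht]
  by_cases hx : tentMap^[t * t + 1 - v] (Real.ofDigits (σ u)) ≤ 1 / 2
  · simp only [hx, decide_true] at hw
    have hy := one_sub_le_iterate_point_of_pulse σ α (k := t * t + 1 - v) (m := v) (J := J)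
      (by omega) hw (by omega) (by rw [pulsePos_true]; omega) (by omega)
    rw [le_abs]; right; linarith
  · simp only [hx, decide_false] at hw
    have hy := iterate_point_le_of_pulse σ α (k := t * t + 1 - v) (m := v) (i := 0) (J := J)
      (by omega) hw (by omega) (by omega) (fun j _ => by rw [pulsePos_false]; omega) (by omega)
    rw [le_abs]; left; linarith

theorem frequently_abs_ofDigits_sub_le (u v : ℕ) {ε : ℝ} (hε : 0 < ε) :
    ∃ᶠ k in atTop,
      |tentMap^[k] (Real.ofDigits (σ u)) - tentMap^[k] (tentMap^[v] (point σ α))| ≤ ε := by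
  obtain ⟨J, hJ⟩ := exists_two_mul_inv_two_pow_lt hε
  refine frequently_atTop.2 fun K => ?_
  obtain ⟨t, htK, ht⟩ := exists_stageCode_eq (3, Nat.pair u v) (K + v + J + 1)
  have htt := Nat.le_mul_self t
  refine ⟨t * t + 1 - v, by omega, ?_⟩
  rw [iterate_point_eq σ α (p := t * t) (by omega) (by omega),
    show t * t + 1 - v = t * t - v + 1 by omega, tentMap_iterate_succ_ofDigits]
  refine (abs_tentMap_ofDigits_sub_le fun j hj => ?_).trans hJ.le
  rw [digitSeq_stage σ α (by omega), if_pos (by omega)]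
  simp [windowDigit, ht]

theorem frequently_half_sub_le_abs_sub_of_isPeriodicPt {n : ℕ} {p : ℝ}
    (hp : Function.IsPeriodicPt tentMap n p) (hn : 0 < n) (m : ℕ) {ε : ℝ} (hε : 0 < ε) :
    ∃ᶠ k in atTop,
      1 / 2 - ε ≤ |tentMap^[k] (tentMap^[m] (point σ α)) - tentMap^[k] p| := by
  obtain ⟨J, hJ⟩ := exists_two_mul_inv_two_pow_lt hε
  refine frequently_atTop.2 fun K => ?_
  by_cases hhalf : ∃ j < n, 1 / 2 ≤ tentMap^[j] p
  · obtain ⟨j, hjn, hj⟩ := hhalf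
    obtain ⟨t, htK⟩ : ∃ t, K + m + 2 * n + J + 1 ≤ t := ⟨_, le_rfl⟩
    obtain ⟨b, hbdef⟩ : ∃ b, b = t * t + t + 1 - m := ⟨_, rfl⟩
    -- the times `j + n * l` revisit `T^[j] p ≥ 1/2`, and one of them falls in the zero gap
    -- of stage `t`, which starts at time `b`
    obtain ⟨l, hbl, hlb⟩ : ∃ l, b < n * l ∧ n * l ≤ b + n :=
      ⟨b / n + 1, Nat.lt_mul_div_succ b hn,
        by rw [mul_add, mul_one]; linarith [Nat.mul_div_le b n]⟩
    have htt := Nat.le_mul_self t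
    refine ⟨j + n * l, by omega, ?_⟩
    have hy := iterate_point_le_of_gap σ α (t := t) (k := j + n * l) (m := m)
      (i := t + (j + n * l - b)) (J := J) (by omega) (by omega) (by omega) (by omega)
    rw [Function.iterate_add_apply tentMap j _ p, (hp.mul_const _).eq, le_abs]; right; linarith
  · push Not at hhalf
    obtain rfl := eq_zero_of_isPeriodicPt_of_iterate_lt_half hp hn hhalf
    obtain ⟨t, htK, ht⟩ := exists_stageCode_eq (1, 0) (K + m + J + 1)
    have hw : ∀ i, windowDigit σ α t i = pulse (α 0) t i := fun i => by simp [windowDigit, ht]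
    have hP := pulsePos_lt (α 0) (t := t) (by omega)
    have htt := Nat.le_mul_self t
    refine ⟨t * t + pulsePos (α 0) t + 1 - m, by omega, ?_⟩
    have hy := one_sub_le_iterate_point_of_pulse σ α (k := t * t + pulsePos (α 0) t + 1 - m)
      (m := m) (J := J) (by omega) hw (by omega) (by omega) (by omega)
    rw [Function.iterate_fixed (f := tentMap) (x := 0) (by simp [tentMap]), le_abs]
    left; linarith

theorem exists_abs_iterate_point_sub_lt (m : ℕ) {z : ℝ} (hz : z ∈ Set.Icc 0 1) {ε : ℝ}
    (hε : 0 < ε) : ∃ k, |tentMap^[k] (tentMap^[m] (point σ α)) - z| < ε := by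
  obtain ⟨δ, -, hδ⟩ := Real.ofDigits_SurjOn one_lt_two
    (show z / 2 ∈ Set.Icc (0 : ℝ) 1 from ⟨by linarith [hz.1], by linarith [hz.2]⟩)
  obtain ⟨J, hJ⟩ := exists_two_mul_inv_two_pow_lt hε
  obtain ⟨c, hc⟩ := exists_word_eq δ J
  obtain ⟨t, htK, ht⟩ := exists_stageCode_eq (0, c) (m + J + 1)
  have htt := Nat.le_mul_self t
  refine ⟨t * t + 1 - m, ?_⟩
  have hTz : tentMap (Real.ofDigits δ) = z := by
    rw [hδ, tentMap_of_le_half (by linarith [hz.2])]; ring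
  rw [iterate_point_eq σ α (p := t * t) (by omega) (by omega), ← hTz]
  refine (abs_tentMap_ofDigits_sub_le fun j hj => ?_).trans_lt hJ
  rw [digitSeq_stage σ α (by omega), if_pos (by omega)]
  simp [windowDigit, ht, hc j hj]

theorem frequently_one_sub_le_abs_sub_of_apply_ne {β : ℕ → Bool} {j : ℕ} (hj : α j ≠ β j)
    (m n : ℕ) {ε : ℝ} (hε : 0 < ε) :
    ∃ᶠ k in atTop, 1 - ε ≤
      |tentMap^[k] (tentMap^[m] (point σ α)) - tentMap^[k] (tentMap^[n] (point σ β))| := by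
  cases hα : α j <;> cases hβ : β j <;> simp only [hα, hβ, ne_eq, not_true_eq_false] at hj
  · simpa only [abs_sub_comm] using
      frequently_one_sub_le_abs_sub_of_apply_true_of_apply_false σ β hβ hα n m hε
  · exact frequently_one_sub_le_abs_sub_of_apply_true_of_apply_false σ α hα hβ m n hε

theorem injective_point : Function.Injective (point σ) := by
  intro α β h
  by_contra hne
  obtain ⟨j, hj⟩ := Function.ne_iff.mp hne
  obtain ⟨k, hk⟩ := (frequently_one_sub_le_abs_sub_of_apply_ne σ α hj 0 0 one_half_pos).exists
  norm_num [h] at hk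

def scrambledSet : Set ℝ := {y | ∃ (α : ℕ → Bool) (m : ℕ), tentMap^[m] (point σ α) = y}

theorem scrambledSet_subset_Icc : scrambledSet σ ⊆ Set.Icc 0 1 := by
  rintro _ ⟨α, m, rfl⟩
  exact iterate_point_mem_Icc σ α 0 m

theorem image_tentMap_scrambledSet_subset : tentMap '' scrambledSet σ ⊆ scrambledSet σ := by
  rintro _ ⟨_, ⟨α, m, rfl⟩, rfl⟩
  exact ⟨α, m + 1, Function.iterate_succ_apply' _ _ _⟩

theorem Icc_subset_closure_range_iterate {y : ℝ} (hy : y ∈ scrambledSet σ) :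
    Set.Icc 0 1 ⊆ closure (Set.range fun n => tentMap^[n] y) := by
  obtain ⟨α, m, rfl⟩ := hy
  refine fun z hz => Metric.mem_closure_iff.2 fun ε hε => ?_
  obtain ⟨k, hk⟩ := exists_abs_iterate_point_sub_lt σ α m hz hε
  exact ⟨_, ⟨k, rfl⟩, by rwa [Real.dist_eq, abs_sub_comm]⟩

theorem Icc_subset_closure_scrambledSet : Set.Icc 0 1 ⊆ closure (scrambledSet σ) :=
  (Icc_subset_closure_range_iterate σ ⟨fun _ => false, 0, rfl⟩).trans <|
    closure_mono <| Set.range_subset_iff.2 fun n => ⟨fun _ => false, n, rfl⟩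

theorem not_countable_scrambledSet : ¬ (scrambledSet σ).Countable := by
  have : Uncountable (ℕ → Bool) :=
    Cardinal.aleph0_lt_mk_iff.1 (by simpa using Cardinal.cantor Cardinal.aleph0)
  have hmaps : Set.MapsTo (point σ) Set.univ (scrambledSet σ) := fun α _ => ⟨α, 0, rfl⟩
  exact fun h => Set.not_countable_univ (hmaps.countable_of_injOn (injective_point σ).injOn h)

theorem limsup_and_liminf_of_mem_scrambledSet {x y : ℝ} (hx : x ∈ scrambledSet σ)
    (hy : y ∈ scrambledSet σ) (hxy : x ≠ y) :
    1 ≤ limsup (fun n => |tentMap^[n] x - tentMap^[n] y|) atTop ∧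
      liminf (fun n => |tentMap^[n] x - tentMap^[n] y|) atTop = 0 := by
  obtain ⟨α, m, rfl⟩ := hx
  obtain ⟨β, n, rfl⟩ := hy
  have hx := scrambledSet_subset_Icc σ ⟨α, m, rfl⟩
  have hy := scrambledSet_subset_Icc σ ⟨β, n, rfl⟩
  refine ⟨le_limsup_abs_iterate_sub hx hy fun ε hε => ?_,
    liminf_abs_iterate_sub_eq_zero hx hy fun ε hε => frequently_abs_sub_le σ α β m n hε⟩
  by_cases hαβ : α = β
  · subst hαβ
    rcases lt_trichotomy m n with hmn | rfl | hmn
    · exact frequently_one_sub_le_abs_sub_of_lt σ α hmn hε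
    · exact absurd rfl hxy
    · simpa only [abs_sub_comm] using frequently_one_sub_le_abs_sub_of_lt σ α hmn hε
  · obtain ⟨j, hj⟩ := Function.ne_iff.mp hαβ
    exact frequently_one_sub_le_abs_sub_of_apply_ne σ α hj m n hε

theorem half_le_limsup_of_isPeriodicPt {x p : ℝ} (hx : x ∈ scrambledSet σ)
    (hp : p ∈ Set.Icc 0 1) {n : ℕ} (hn : 0 < n) (hpn : Function.IsPeriodicPt tentMap n p) :
    1 / 2 ≤ limsup (fun k => |tentMap^[k] x - tentMap^[k] p|) atTop := by
  obtain ⟨α, m, rfl⟩ := hx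
  exact le_limsup_abs_iterate_sub (scrambledSet_subset_Icc σ ⟨α, m, rfl⟩) hp fun ε hε =>
    frequently_half_sub_le_abs_sub_of_isPeriodicPt σ α hpn hn m hε

theorem limsup_and_liminf_ofDigits_of_mem_scrambledSet (u : ℕ) {y : ℝ}
    (hy : y ∈ scrambledSet σ) :
    1 / 2 ≤ limsup (fun n => |tentMap^[n] (Real.ofDigits (σ u)) - tentMap^[n] y|) atTop ∧
      liminf (fun n => |tentMap^[n] (Real.ofDigits (σ u)) - tentMap^[n] y|) atTop = 0 := by
  obtain ⟨α, v, rfl⟩ := hy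
  have hy := scrambledSet_subset_Icc σ ⟨α, v, rfl⟩
  exact ⟨le_limsup_abs_iterate_sub (ofDigits_mem_Icc _) hy fun ε hε =>
      frequently_half_sub_le_abs_ofDigits_sub σ α u v hε,
    liminf_abs_iterate_sub_eq_zero (ofDigits_mem_Icc _) hy fun ε hε =>
      frequently_abs_ofDigits_sub_le σ α u v hε⟩

end TentScrambled

theorem exists_subset_range_ofDigits {X : Set ℝ} (hX : X ⊆ Set.Icc 0 1) (hc : X.Countable) :
    ∃ σ : ℕ → ℕ → Fin 2, X ⊆ Set.range fun u => Real.ofDigits (σ u) := by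
  obtain ⟨σ, hσ⟩ := Set.countable_iff_exists_subset_range.1
    (hc.image (Function.invFunOn (Real.ofDigits (b := 2)) Set.univ))
  refine ⟨σ, fun x hx => ?_⟩
  obtain ⟨u, hu⟩ := hσ ⟨x, hx, rfl⟩
  exact ⟨u, by
    dsimp only; rw [hu]; exact (Real.ofDigits_SurjOn one_lt_two).rightInvOn_invFunOn (hX hx)⟩

open TentScrambled in
theorem tent_scrambled_set_avoiding_countable_set_general
    (X : Set ℝ) (hXsub : X ⊆ Set.Icc 0 1) (hXc : X.Countable) :
    ∃ Y : Set ℝ,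
      Y ⊆ Set.Icc (0 : ℝ) 1 ∧
      Set.Icc (0 : ℝ) 1 ⊆ closure Y ∧
      ¬ Y.Countable ∧
      tentMap '' Y ⊆ Y ∧
      (∀ x ∈ Y, ∀ y ∈ Y, x ≠ y →
        1 ≤ limsup (fun n => |tentMap^[n] x - tentMap^[n] y|) atTop ∧
        liminf (fun n => |tentMap^[n] x - tentMap^[n] y|) atTop = 0) ∧
      (∀ x ∈ Y, ∀ p ∈ Set.Icc (0 : ℝ) 1, (∃ k : ℕ, 0 < k ∧ tentMap^[k] p = p) →
        (1 : ℝ) / 2 ≤ limsup (fun n => |tentMap^[n] x - tentMap^[n] p|) atTop) ∧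
      (∀ y ∈ Y, Set.Icc (0 : ℝ) 1 ⊆ closure (Set.range fun n => tentMap^[n] y)) ∧
      (∀ x ∈ X, ∀ y ∈ Y,
        (1 : ℝ) / 2 ≤ limsup (fun n => |tentMap^[n] x - tentMap^[n] y|) atTop ∧
        liminf (fun n => |tentMap^[n] x - tentMap^[n] y|) atTop = 0) := by
  obtain ⟨σ, hσ⟩ := exists_subset_range_ofDigits hXsub hXc
  refine ⟨scrambledSet σ, scrambledSet_subset_Icc σ, Icc_subset_closure_scrambledSet σ,
    not_countable_scrambledSet σ, image_tentMap_scrambledSet_subset σ,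
    fun x hx y hy hxy => limsup_and_liminf_of_mem_scrambledSet σ hx hy hxy,
    fun x hx p hp ⟨k, hk, hpk⟩ => half_le_limsup_of_isPeriodicPt σ hx hp hk hpk,
    fun y hy => Icc_subset_closure_range_iterate σ hy, fun x hx y hy => ?_⟩
  obtain ⟨u, rfl⟩ := hσ hx
  exact limsup_and_liminf_ofDigits_of_mem_scrambledSet σ u hy

/-- For any countably infinite subset `X` of `[0,1]` there exists a dense,
uncountable, `T`-invariant 1-scrambled set `Y` of transitive points in `[0,1]`
such that for every `x ∈ X` and `y ∈ Y`, `limsup |Tⁿx - Tⁿy| ≥ 1/2` and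
`liminf |Tⁿx - Tⁿy| = 0`. -/
theorem tent_scrambled_set_avoiding_countable_set
    (X : Set ℝ) (hXsub : X ⊆ Set.Icc 0 1) (hXc : X.Countable) (hXi : X.Infinite) :
    ∃ Y : Set ℝ,
      Y ⊆ Set.Icc (0 : ℝ) 1 ∧
      Set.Icc (0 : ℝ) 1 ⊆ closure Y ∧
      ¬ Y.Countable ∧
      tentMap '' Y ⊆ Y ∧
      (∀ x ∈ Y, ∀ y ∈ Y, x ≠ y →
        1 ≤ limsup (fun n => |tentMap^[n] x - tentMap^[n] y|) atTop ∧
        liminf (fun n => |tentMap^[n] x - tentMap^[n] y|) atTop = 0) ∧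
      (∀ x ∈ Y, ∀ p ∈ Set.Icc (0 : ℝ) 1, (∃ k : ℕ, 0 < k ∧ tentMap^[k] p = p) →
        (1 : ℝ) / 2 ≤ limsup (fun n => |tentMap^[n] x - tentMap^[n] p|) atTop) ∧
      (∀ y ∈ Y, Set.Icc (0 : ℝ) 1 ⊆ closure (Set.range fun n => tentMap^[n] y)) ∧
      (∀ x ∈ X, ∀ y ∈ Y,
        (1 : ℝ) / 2 ≤ limsup (fun n => |tentMap^[n] x - tentMap^[n] y|) atTop ∧
        liminf (fun n => |tentMap^[n] x - tentMap^[n] y|) atTop = 0) :=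
  tent_scrambled_set_avoiding_countable_set_general X hXsub hXc
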